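/- arXiv:1405.0713 — 2 statements merged into one kernel-verified Lean document; each statement's English description precedes it below -/
import Mathlib

section
/- Let G be a κ-deletion-minimal graph. If a vertex v is adjacent to a vertex v₀ of degree 2 with N_G(v₀) = {w, v}, then v is adjacent to at least κ − deg_G(w) + 1 vertices of degree at least κ − deg_G(v) + 2. -/
/-!
Delete the edge `vv₀` and take an acyclic edge coloring `φ` of the rest with colors `< κ`.
Let `a` be a color missing at `w`, or the color of `wv₀`, and `γ` a color missing at `v`.
Recoloring `wv₀` with `a` and `vv₀` with `γ` gives a proper coloring of `G`, which cannot be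
acyclic; the resulting two-colored cycle passes through `v₀`, so it leaves `v` along an edge `vu`
of color `a` and leaves `u` along an edge of color `γ`. As `γ` ranges over the `κ - deg v + 1`
colors missing at `v`, the vertex `u` stays the same, so `deg u ≥ κ - deg v + 2`; and the
`κ - deg w + 1` choices of `a` give distinct such neighbors `u`. When `deg v = κ` no color is
missing at `v`, but then the bound only asks for neighbors of degree at least `2`, and a
deletion-minimal graph has no vertex of degree one.
-/

open SimpleGraph

universe u₁ u₂

/-- The degree of a vertex `x` in a graph `G` (number of neighbors). -/
noncomputable def vdeg {V : Type u₁} (G : SimpleGraph V) (x : V) : ℕ :=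
  (G.neighborSet x).ncard

/-- The maximum degree `Δ(G)` of a graph `G`. -/
noncomputable def maxDeg {V : Type u₁} (G : SimpleGraph V) : ℕ :=
  sSup (Set.range (vdeg G))

/-- A proper edge coloring: distinct edges of `G` sharing an endpoint get distinct colors. -/
def IsProperEdgeColoring {V : Type u₁} (G : SimpleGraph V) (φ : Sym2 V → ℕ) : Prop :=
  ∀ e₁ ∈ G.edgeSet, ∀ e₂ ∈ G.edgeSet, e₁ ≠ e₂ → (∃ x : V, x ∈ e₁ ∧ x ∈ e₂) → φ e₁ ≠ φ e₂

/-- An acyclic edge coloring: a proper edge coloring in which every cycle receives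
at least three colors. -/
def IsAcyclicEdgeColoring {V : Type u₁} (G : SimpleGraph V) (φ : Sym2 V → ℕ) : Prop :=
  IsProperEdgeColoring G φ ∧
    ∀ (x : V) (c : G.Walk x x), c.IsCycle → 3 ≤ (c.edges.map φ).toFinset.card

/-- The acyclic chromatic index `χ'ₐ(G)`: the least number of colors in an acyclic
edge coloring of `G`. -/
noncomputable def acyclicChromaticIndex {V : Type u₁} (G : SimpleGraph V) : ℕ :=
  sInf {n : ℕ | ∃ φ : Sym2 V → ℕ, IsAcyclicEdgeColoring G φ ∧ ∀ e ∈ G.edgeSet, φ e < n}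

/-- A graph `G` with maximum degree at most `κ` is `κ`-deletion-minimal if
`χ'ₐ(G) > κ` while `χ'ₐ(H) ≤ κ` for every proper subgraph `H` of `G`. -/
def DeletionMinimal {V : Type u₁} (G : SimpleGraph V) (κ : ℕ) : Prop :=
  maxDeg G ≤ κ ∧ κ < acyclicChromaticIndex G ∧
    ∀ H : SimpleGraph V, H < G → acyclicChromaticIndex H ≤ κ

/-- `H` is a minor of `G`: there are nonempty, pairwise disjoint, connected branch sets
in `G`, one for each vertex of `H`, with an edge of `G` between the branch sets of any
two adjacent vertices of `H`. -/
def IsMinor {W : Type u₂} {V : Type u₁} (H : SimpleGraph W) (G : SimpleGraph V) : Prop :=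
  ∃ B : W → Set V,
    (∀ w, (B w).Nonempty) ∧
    (∀ w, (G.induce (B w)).Connected) ∧
    (∀ w₁ w₂, w₁ ≠ w₂ → Disjoint (B w₁) (B w₂)) ∧
    ∀ w₁ w₂, H.Adj w₁ w₂ → ∃ v₁ ∈ B w₁, ∃ v₂ ∈ B w₂, G.Adj v₁ v₂

/-- A proper minor of `G`: a minor which is not isomorphic to `G`. -/
def IsProperMinor {W : Type u₂} {V : Type u₁} (H : SimpleGraph W) (G : SimpleGraph V) : Prop :=
  IsMinor H G ∧ ¬ Nonempty (H ≃g G)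

/-- A graph `G` with maximum degree at most `κ` is `κ`-minimal if `χ'ₐ(G) > κ` while
`χ'ₐ(H) ≤ κ` for every proper minor `H` of `G` with `Δ(H) ≤ Δ(G)`. -/
def KMinimal {V : Type u₁} (G : SimpleGraph V) (κ : ℕ) : Prop :=
  maxDeg G ≤ κ ∧ κ < acyclicChromaticIndex G ∧
    ∀ (W : Type u₁) (H : SimpleGraph W),
      IsProperMinor H G → maxDeg H ≤ maxDeg G → acyclicChromaticIndex H ≤ κ

/-- Planarity, characterized combinatorially (Wagner's theorem): a graph is planar iff
it has neither a `K₅` minor nor a `K₃,₃` minor. -/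
def IsPlanar {V : Type u₁} (G : SimpleGraph V) : Prop :=
  ¬ IsMinor (completeGraph (Fin 5)) G ∧
    ¬ IsMinor (completeBipartiteGraph (Fin 3) (Fin 3)) G

/-- `G` is 2-connected: it is connected, has at least three vertices, and removing
any single vertex leaves it connected. -/
def TwoConnected {V : Type u₁} (G : SimpleGraph V) : Prop :=
  G.Connected ∧ 3 ≤ Nat.card V ∧ ∀ x : V, (G.induce {y : V | y ≠ x}).Connected

/-- A path of `H` whose edges are all colored `α` or `β` and alternate. -/
def IsAltPath {V : Type u₁} (H : SimpleGraph V) (φ : Sym2 V → ℕ) (α β : ℕ)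
    {x y : V} (p : H.Walk x y) : Prop :=
  p.IsPath ∧ (∀ e ∈ p.edges, φ e = α ∨ φ e = β) ∧
    p.edges.Chain' fun e₁ e₂ => φ e₁ ≠ φ e₂

/-- A maximal `(α, β)`-dichromatic path: an alternating path that is not properly
contained in any other alternating path. -/
def IsMaxAltPath {V : Type u₁} (H : SimpleGraph V) (φ : Sym2 V → ℕ) (α β : ℕ)
    {x y : V} (p : H.Walk x y) : Prop :=
  IsAltPath H φ α β p ∧
    ∀ {x' y' : V} (q : H.Walk x' y'), IsAltPath H φ α β q →
      (∀ z ∈ p.support, z ∈ q.support) → (∀ e ∈ p.edges, e ∈ q.edges) →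
      ∀ e ∈ q.edges, e ∈ p.edges

open Function

section EdgeColorings

variable {V : Type*} {G H : SimpleGraph V} {φ ψ : Sym2 V → ℕ} {κ : ℕ}

def edgeColorsAt (G : SimpleGraph V) (φ : Sym2 V → ℕ) (x : V) : Set ℕ :=
  (fun y => φ s(x, y)) '' G.neighborSet x

lemma IsProperEdgeColoring.mono (hφ : IsProperEdgeColoring G φ) (hHG : H ≤ G) :
    IsProperEdgeColoring H φ :=
  fun e₁ he₁ e₂ he₂ => hφ e₁ (edgeSet_mono hHG he₁) e₂ (edgeSet_mono hHG he₂)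

lemma IsProperEdgeColoring.eq_of_color_eq (hφ : IsProperEdgeColoring G φ) {x y z : V}
    (hy : G.Adj x y) (hz : G.Adj x z) (h : φ s(x, y) = φ s(x, z)) : y = z := by
  by_contra hyz
  exact hφ _ hy _ hz (fun h' => hyz (Sym2.congr_right.mp h')) ⟨x, by simp, by simp⟩ h

lemma IsProperEdgeColoring.ncard_edgeColorsAt (hφ : IsProperEdgeColoring G φ) (x : V) :
    (edgeColorsAt G φ x).ncard = vdeg G x :=
  Set.InjOn.ncard_image fun _ hy _ hz h => hφ.eq_of_color_eq hy hz h

lemma edgeColorsAt_subset_Iio (hφκ : ∀ e ∈ G.edgeSet, φ e < κ) (x : V) :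
    edgeColorsAt G φ x ⊆ Set.Iio κ := by
  rintro _ ⟨y, hy, rfl⟩
  exact hφκ _ hy

lemma IsProperEdgeColoring.update [DecidableEq V] {x y : V} {c : ℕ}
    (hφ : IsProperEdgeColoring (G.deleteEdges {s(x, y)}) φ)
    (hx : ∀ z, G.Adj x z → z ≠ y → φ s(x, z) ≠ c)
    (hy : ∀ z, G.Adj y z → z ≠ x → φ s(y, z) ≠ c) :
    IsProperEdgeColoring G (update φ s(x, y) c) := by
  have hc : ∀ e ∈ G.edgeSet, e ≠ s(x, y) → (∃ t, t ∈ s(x, y) ∧ t ∈ e) → c ≠ φ e := by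
    rintro e he hne ⟨t, ht, hte⟩
    obtain ⟨z, rfl⟩ := Sym2.mem_iff_exists.mp hte
    rcases Sym2.mem_iff.mp ht with rfl | rfl
    · exact (hx z he (by rintro rfl; exact hne rfl)).symm
    · exact (hy z he (by rintro rfl; exact hne Sym2.eq_swap)).symm
  intro e₁ he₁ e₂ he₂ hne hshare
  by_cases h₁ : e₁ = s(x, y)
  · subst h₁
    rw [update_self, update_of_ne hne.symm]
    exact hc e₂ he₂ hne.symm hshare
  by_cases h₂ : e₂ = s(x, y)
  · subst h₂
    obtain ⟨t, ht₁, ht₂⟩ := hshare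
    rw [update_self, update_of_ne hne]
    exact (hc e₁ he₁ h₁ ⟨t, ht₂, ht₁⟩).symm
  rw [update_of_ne h₁, update_of_ne h₂]
  exact hφ e₁ (by rw [edgeSet_deleteEdges]; exact ⟨he₁, h₁⟩) e₂
    (by rw [edgeSet_deleteEdges]; exact ⟨he₂, h₂⟩) hne hshare

lemma update_lt_of_deleteEdges [DecidableEq V] {k : Sym2 V} {c : ℕ}
    (hφκ : ∀ e ∈ (G.deleteEdges {k}).edgeSet, φ e < κ) (hc : c < κ) :
    ∀ e ∈ G.edgeSet, update φ k c e < κ := by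
  intro e he
  rcases eq_or_ne e k with rfl | hne
  · rwa [update_self]
  · rw [update_of_ne hne]
    exact hφκ e (by rw [edgeSet_deleteEdges]; exact ⟨he, hne⟩)

lemma update_update_apply_of_notMem [DecidableEq V] {k₁ k₂ e : Sym2 V} {x : V} {c₁ c₂ : ℕ}
    (h₁ : x ∈ k₁) (h₂ : x ∈ k₂) (he : x ∉ e) : update (update φ k₂ c₂) k₁ c₁ e = φ e := by
  rw [update_of_ne (by rintro rfl; exact he h₁), update_of_ne (by rintro rfl; exact he h₂)]

lemma isAcyclicEdgeColoring_of_injective (hφ : Injective φ) : IsAcyclicEdgeColoring G φ := by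
  refine ⟨fun _ _ _ _ hne _ => hφ.ne hne, fun x c hc => ?_⟩
  rw [List.toFinset_card_of_nodup (hc.edges_nodup.map hφ), List.length_map, Walk.length_edges]
  exact hc.three_le_length

lemma acyclicChromaticIndex_le (hφ : IsAcyclicEdgeColoring G φ) (hφκ : ∀ e ∈ G.edgeSet, φ e < κ) :
    acyclicChromaticIndex G ≤ κ :=
  Nat.sInf_le ⟨φ, hφ, hφκ⟩

lemma exists_isAcyclicEdgeColoring_lt [Finite V] (h : acyclicChromaticIndex G ≤ κ) :
    ∃ φ, IsAcyclicEdgeColoring G φ ∧ ∀ e ∈ G.edgeSet, φ e < κ := by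
  let f := Finite.equivFin (Sym2 V)
  obtain ⟨φ, hφ, hφn⟩ := Nat.sInf_mem (s := {n | ∃ φ, IsAcyclicEdgeColoring G φ ∧
      ∀ e ∈ G.edgeSet, φ e < n}) ⟨Nat.card (Sym2 V), fun e => f e,
    isAcyclicEdgeColoring_of_injective (Fin.val_injective.comp f.injective), fun e _ => (f e).isLt⟩
  exact ⟨φ, hφ, fun e he => (hφn e he).trans_le h⟩

lemma exists_cycle_of_lt_acyclicChromaticIndex {k : Sym2 V} (hκ : κ < acyclicChromaticIndex G)
    (hφ : IsAcyclicEdgeColoring (G.deleteEdges {k}) φ) (hψ : IsProperEdgeColoring G ψ)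
    (hψκ : ∀ e ∈ G.edgeSet, ψ e < κ) :
    ∃ (x : V) (p : G.Walk x x), p.IsCycle ∧ (p.edges.map ψ).toFinset.card < 3 ∧
      ∃ e ∈ p.edges, e = k ∨ ψ e ≠ φ e := by
  by_contra! hcon
  refine hκ.not_ge (acyclicChromaticIndex_le ⟨hψ, fun x p hp => ?_⟩ hψκ)
  by_contra! hlt
  have hH : ∀ e ∈ p.edges, e ∈ (G.deleteEdges {k}).edgeSet := fun e he => by
    rw [edgeSet_deleteEdges]
    exact ⟨p.edges_subset_edgeSet he, (hcon x p hp hlt e he).1⟩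
  have hagree : ∀ e ∈ p.edges, ψ e = φ e := fun e he => (hcon x p hp hlt e he).2
  have := hφ.2 x (p.transfer _ hH) (hp.transfer hH)
  rw [Walk.edges_transfer, ← List.map_congr_left hagree] at this
  omega

end EdgeColorings

lemma List.eq_or_eq_of_card_toFinset_lt_three {α : Type*} [DecidableEq α] {l : List α}
    {a b c : α} (hl : l.toFinset.card < 3) (ha : a ∈ l) (hb : b ∈ l) (hab : a ≠ b)
    (hc : c ∈ l) : c = a ∨ c = b := by
  by_contra! h
  have hsub : ({a, b, c} : Finset α) ⊆ l.toFinset := by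
    simp [Finset.insert_subset_iff, ha, hb, hc]
  have := Finset.card_le_card hsub
  rw [Finset.card_eq_three.mpr ⟨a, b, c, hab, h.1.symm, h.2.symm, rfl⟩] at this
  omega

namespace SimpleGraph.Walk.IsCycle

variable {V : Type*} {G : SimpleGraph V} {x y : V} {p : G.Walk x x}

lemma exists_mem_edges_ne (hp : p.IsCycle) (hy : y ∈ p.support) (a : V) :
    ∃ b, b ≠ a ∧ s(y, b) ∈ p.edges := by
  by_contra! h
  have hsub : p.toSubgraph.neighborSet y ⊆ {a} := fun b hb => by
    by_contra hba
    exact h b hba (adj_toSubgraph_iff_mem_edges.mp hb)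
  have := Set.ncard_le_ncard hsub
  rw [hp.ncard_neighborSet_toSubgraph_eq_two hy, Set.ncard_singleton] at this
  omega

lemma notMem_support_of_neighborSet_eq_singleton (hp : p.IsCycle) {a : V}
    (hN : G.neighborSet y = {a}) : y ∉ p.support := by
  intro hy
  obtain ⟨b, hba, hb⟩ := hp.exists_mem_edges_ne hy a
  have : b ∈ G.neighborSet y := p.adj_of_mem_edges hb
  exact hba (by simpa [hN] using this)

lemma mem_edges_of_neighborSet_eq_pair (hp : p.IsCycle) (hy : y ∈ p.support) {a b : V}
    (hN : G.neighborSet y = {a, b}) : s(a, y) ∈ p.edges ∧ s(b, y) ∈ p.edges := by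
  have hnbr : ∀ c, s(y, c) ∈ p.edges → c = a ∨ c = b := fun c hc => by
    have : c ∈ G.neighborSet y := p.adj_of_mem_edges hc
    simpa [hN] using this
  obtain ⟨c, hcb, hc⟩ := hp.exists_mem_edges_ne hy b
  obtain ⟨d, hda, hd⟩ := hp.exists_mem_edges_ne hy a
  rw [Sym2.eq_swap, ← (hnbr c hc).resolve_right hcb, Sym2.eq_swap (a := b),
    ← (hnbr d hd).resolve_left hda]
  exact ⟨hc, hd⟩

end SimpleGraph.Walk.IsCycle

lemma Set.ncard_insert_Iio_sdiff {κ c : ℕ} {C : Set ℕ} (hC : C ⊆ Set.Iio κ) (hc : c ∈ C) :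
    (insert c (Set.Iio κ \ C)).ncard = κ - C.ncard + 1 := by
  rw [Set.ncard_insert_of_notMem (fun h => h.2 hc) (Set.finite_Iio κ).sdiff,
    Set.ncard_sdiff hC ((Set.finite_Iio κ).subset hC), Set.ncard_Iio_nat]

section Degrees

variable {V : Type*} [Finite V] {G H : SimpleGraph V}

lemma vdeg_le_maxDeg (G : SimpleGraph V) (x : V) : vdeg G x ≤ maxDeg G :=
  le_csSup (Set.finite_range _).bddAbove ⟨x, rfl⟩

lemma vdeg_mono (hHG : H ≤ G) (x : V) : vdeg H x ≤ vdeg G x :=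
  Set.ncard_le_ncard fun _ hy => hHG hy

lemma vdeg_pos {x y : V} (hxy : G.Adj x y) : 0 < vdeg G x :=
  (Set.ncard_pos (Set.toFinite _)).mpr ⟨y, hxy⟩

lemma vdeg_deleteEdges_lt {x y : V} (hxy : G.Adj x y) :
    vdeg (G.deleteEdges {s(x, y)}) x < vdeg G x := by
  refine Set.ncard_lt_ncard ((Set.ssubset_iff_of_subset
    (s := (G.deleteEdges {s(x, y)}).neighborSet x) fun _ hz => deleteEdges_le _ hz).mpr
    ⟨y, hxy, ?_⟩)
  simp

lemma edgeColorsAt_finite (φ : Sym2 V → ℕ) (x : V) : (edgeColorsAt G φ x).Finite :=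
  (Set.toFinite _).image _

lemma IsProperEdgeColoring.exists_lt_notMem_edgeColorsAt {φ : Sym2 V → ℕ} {κ : ℕ}
    (hφ : IsProperEdgeColoring G φ) {x : V} (hx : vdeg G x < κ) :
    ∃ c < κ, c ∉ edgeColorsAt G φ x :=
  Set.exists_mem_notMem_of_ncard_lt_ncard (t := Set.Iio κ)
    (by rwa [Set.ncard_Iio_nat, hφ.ncard_edgeColorsAt]) (edgeColorsAt_finite φ x)

end Degrees

section DeletionMinimal

variable {V : Type*} [Finite V] {G : SimpleGraph V} {κ : ℕ}

lemma DeletionMinimal.exists_isAcyclicEdgeColoring_deleteEdges (h : DeletionMinimal G κ)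
    {x y : V} (hxy : G.Adj x y) :
    ∃ φ, IsAcyclicEdgeColoring (G.deleteEdges {s(x, y)}) φ ∧
      ∀ e ∈ (G.deleteEdges {s(x, y)}).edgeSet, φ e < κ := by
  refine exists_isAcyclicEdgeColoring_lt (h.2.2 _ ((deleteEdges_le _).lt_of_ne fun hG => ?_))
  have : (G.deleteEdges {s(x, y)}).Adj x y := by rw [hG]; exact hxy
  simp at this

lemma DeletionMinimal.two_le_vdeg (h : DeletionMinimal G κ) {x y : V} (hxy : G.Adj x y) :
    2 ≤ vdeg G y := by
  classical
  by_contra! hy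
  have hNy : G.neighborSet y = {x} := by
    obtain ⟨z, hz⟩ := Set.ncard_eq_one.mp (show vdeg G y = 1 by have := vdeg_pos hxy.symm; omega)
    have hx : x ∈ G.neighborSet y := hxy.symm
    rw [hz] at hx ⊢
    rw [Set.mem_singleton_iff.mp hx]
  obtain ⟨φ, hφ, hφκ⟩ := h.exists_isAcyclicEdgeColoring_deleteEdges hxy
  obtain ⟨c, hcκ, hc⟩ := hφ.1.exists_lt_notMem_edgeColorsAt
    ((vdeg_deleteEdges_lt hxy).trans_le ((vdeg_le_maxDeg G x).trans h.1))
  have hψ : IsProperEdgeColoring G (update φ s(x, y) c) :=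
    hφ.1.update (fun z hz hzy hzc => hc ⟨z, by simp [hz, hzy, hxy.ne], hzc⟩) fun z hz hzx =>
      absurd (Set.mem_singleton_iff.mp (hNy ▸ show z ∈ G.neighborSet y from hz)) hzx
  obtain ⟨_, p, hp, -, e, hep, he⟩ :=
    exists_cycle_of_lt_acyclicChromaticIndex h.2.1 hφ hψ (update_lt_of_deleteEdges hφκ hcκ)
  obtain rfl : e = s(x, y) := by
    by_contra hne
    exact he.elim hne (· (update_of_ne hne _ _))
  exact hp.notMem_support_of_neighborSet_eq_singleton hNy (p.snd_mem_support_of_mem_edges hep)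

end DeletionMinimal

section DegreeTwoNeighbor

variable {V : Type*} {G : SimpleGraph V} {κ : ℕ} {v v₀ w : V}
  {φ : Sym2 V → ℕ} {γ a : ℕ}

lemma adj_iff_of_neighborSet_eq_pair (hN : G.neighborSet v₀ = {w, v}) (z : V) :
    G.Adj v₀ z ↔ z = w ∨ z = v := by
  rw [← mem_neighborSet, hN, Set.mem_insert_iff, Set.mem_singleton_iff]

lemma isProperEdgeColoring_recolor_of_neighborSet_eq_pair [DecidableEq V]
    (hN : G.neighborSet v₀ = {w, v}) (hwv : w ≠ v)
    (hφ : IsProperEdgeColoring (G.deleteEdges {s(v, v₀)}) φ)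
    (hγ : γ ∉ edgeColorsAt (G.deleteEdges {s(v, v₀)}) φ v) (hγa : γ ≠ a)
    (ha : a ∉ edgeColorsAt (G.deleteEdges {s(v, v₀)}) φ w ∨ a = φ s(w, v₀)) :
    IsProperEdgeColoring G (update (update φ s(w, v₀) a) s(v, v₀) γ) := by
  have hadj := adj_iff_of_neighborSet_eq_pair hN
  have hvv₀ : v ≠ v₀ := ((hadj v).mpr (.inr rfl)).ne'
  have hwv₀ : (G.deleteEdges {s(v, v₀)}).Adj w v₀ := by
    simp [((hadj w).mpr (.inl rfl)).symm, hwv, hvv₀.symm]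
  refine (hφ.mono (deleteEdges_le _)).update ?_ ?_ |>.update ?_ ?_
  · intro z hz hzv₀ hza
    rcases ha with ha | rfl
    · exact ha ⟨z, hz, hza⟩
    · exact hzv₀ (hφ.eq_of_color_eq hz hwv₀ hza)
  · intro z hz hzw
    rw [deleteEdges_adj] at hz
    rcases (hadj z).mp hz.1 with rfl | rfl
    · exact absurd rfl hzw
    · exact absurd (Sym2.eq_swap) hz.2
  · intro z hz hzv₀ hzγ
    rw [update_of_ne (by simp [hwv.symm, hvv₀])] at hzγ
    exact hγ ⟨z, by simp [hz, hzv₀, hvv₀], hzγ⟩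
  · intro z hz hzv
    obtain rfl : z = w := ((hadj z).mp hz).resolve_right hzv
    rw [Sym2.eq_swap, update_self]
    exact hγa.symm

lemma exists_isCycle_of_recolor [DecidableEq V]
    (hκ : κ < acyclicChromaticIndex G) (hN : G.neighborSet v₀ = {w, v}) (hwv : w ≠ v)
    (hφ : IsAcyclicEdgeColoring (G.deleteEdges {s(v, v₀)}) φ)
    (hφκ : ∀ e ∈ (G.deleteEdges {s(v, v₀)}).edgeSet, φ e < κ) (hγκ : γ < κ) (haκ : a < κ)
    (hγ : γ ∉ edgeColorsAt (G.deleteEdges {s(v, v₀)}) φ v) (hγa : γ ≠ a)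
    (ha : a ∉ edgeColorsAt (G.deleteEdges {s(v, v₀)}) φ w ∨ a = φ s(w, v₀)) :
    ∃ (x : V) (p : G.Walk x x), p.IsCycle ∧ s(v, v₀) ∈ p.edges ∧
      ∀ e ∈ p.edges, update (update φ s(w, v₀) a) s(v, v₀) γ e = γ ∨
        update (update φ s(w, v₀) a) s(v, v₀) γ e = a := by
  set ψ := update (update φ s(w, v₀) a) s(v, v₀) γ
  have hvv₀ : v ≠ v₀ := ((adj_iff_of_neighborSet_eq_pair hN v).mpr (.inr rfl)).ne'
  have hψκ : ∀ e ∈ G.edgeSet, ψ e < κ := update_lt_of_deleteEdges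
    (update_lt_of_deleteEdges (fun e he => hφκ e (edgeSet_mono (deleteEdges_le _) he)) haκ) hγκ
  obtain ⟨x, p, hp, hcard, e, hep, he⟩ := exists_cycle_of_lt_acyclicChromaticIndex (ψ := ψ) hκ hφ
    (isProperEdgeColoring_recolor_of_neighborSet_eq_pair hN hwv hφ.1 hγ hγa ha) hψκ
  have hv₀p : v₀ ∈ p.support := by
    by_contra hv₀p
    have hv₀e : v₀ ∉ e := fun h => hv₀p (Walk.mem_support_of_mem_edges hep h)
    rcases he with rfl | he
    · exact hv₀e (by simp)
    · exact he (update_update_apply_of_notMem (by simp) (by simp) hv₀e)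
  obtain ⟨hk₂, hk₁⟩ := hp.mem_edges_of_neighborSet_eq_pair hv₀p hN
  have hψ₁ : ψ s(v, v₀) = γ := update_self ..
  have hψ₂ : ψ s(w, v₀) = a := by
    simp only [ψ]
    rw [update_of_ne (by simp [hwv, hvv₀.symm]), update_self]
  exact ⟨x, p, hp, hk₁, fun e he => List.eq_or_eq_of_card_toFinset_lt_three hcard
    (hψ₁ ▸ List.mem_map_of_mem hk₁) (hψ₂ ▸ List.mem_map_of_mem hk₂) hγa (List.mem_map_of_mem he)⟩

lemma exists_adj_color_eq_and_mem_edgeColorsAt [DecidableEq V]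
    (hκ : κ < acyclicChromaticIndex G) (hN : G.neighborSet v₀ = {w, v}) (hwv : w ≠ v)
    (hφ : IsAcyclicEdgeColoring (G.deleteEdges {s(v, v₀)}) φ)
    (hφκ : ∀ e ∈ (G.deleteEdges {s(v, v₀)}).edgeSet, φ e < κ) (hγκ : γ < κ) (haκ : a < κ)
    (hγ : γ ∉ edgeColorsAt (G.deleteEdges {s(v, v₀)}) φ v) (hγa : γ ≠ a)
    (ha : a ∉ edgeColorsAt (G.deleteEdges {s(v, v₀)}) φ w ∨ a = φ s(w, v₀)) :
    ∃ u, (G.deleteEdges {s(v, v₀)}).Adj v u ∧ u ≠ w ∧ φ s(v, u) = a ∧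
      γ ∈ edgeColorsAt (G.deleteEdges {s(v, v₀)}) φ u := by
  set H := G.deleteEdges {s(v, v₀)}
  have hadj := adj_iff_of_neighborSet_eq_pair hN
  have hvv₀ : v ≠ v₀ := ((hadj v).mpr (.inr rfl)).ne'
  have hwv₀ : H.Adj w v₀ := by simp [H, ((hadj w).mpr (.inl rfl)).symm, hwv, hvv₀.symm]
  obtain ⟨_, p, hp, hk₁, hcol⟩ :=
    exists_isCycle_of_recolor hκ hN hwv hφ hφκ hγκ haκ hγ hγa ha
  have hφcol : ∀ y z, s(y, z) ∈ p.edges → y ≠ v₀ → z ≠ v₀ → φ s(y, z) = γ ∨ φ s(y, z) = a :=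
    fun y z hyz hy hz => by
      rw [← update_update_apply_of_notMem (φ := φ) (c₁ := γ) (c₂ := a) (Sym2.mem_mk_right v v₀)
        (Sym2.mem_mk_right w v₀) (by simp [hy.symm, hz.symm])]
      exact hcol _ hyz
  obtain ⟨u, huv₀, hvu⟩ := hp.exists_mem_edges_ne (p.fst_mem_support_of_mem_edges hk₁) v₀
  have hHvu : H.Adj v u := by simp [H, p.adj_of_mem_edges hvu, huv₀, hvv₀]
  have hvu_col : φ s(v, u) = a :=
    (hφcol v u hvu hvv₀ huv₀).resolve_left fun h => hγ ⟨u, hHvu, h⟩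
  have huw : u ≠ w := by
    rintro rfl
    rcases ha with ha | rfl
    · exact ha ⟨v, hHvu.symm, by simpa [Sym2.eq_swap] using hvu_col⟩
    · exact hvv₀ (hφ.1.eq_of_color_eq hHvu.symm hwv₀ (by rw [Sym2.eq_swap]; exact hvu_col))
  obtain ⟨t, htv, hut⟩ := hp.exists_mem_edges_ne (p.snd_mem_support_of_mem_edges hvu) v
  have htv₀ : t ≠ v₀ := by
    rintro rfl
    rcases (hadj u).mp (p.adj_of_mem_edges hut).symm with rfl | rfl
    exacts [huw rfl, hHvu.ne rfl]
  have hHut : H.Adj u t := by simp [H, p.adj_of_mem_edges hut, hHvu.ne', huv₀]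
  refine ⟨u, hHvu, huw, hvu_col, t, hHut, ?_⟩
  refine (hφcol u t hut huv₀ htv₀).resolve_right fun h =>
    htv (hφ.1.eq_of_color_eq hHut hHvu.symm ?_)
  rw [h, Sym2.eq_swap, hvu_col]

lemma exists_adj_color_eq_of_vdeg_lt [Finite V] [DecidableEq V]
    (hκ : κ < acyclicChromaticIndex G) (hN : G.neighborSet v₀ = {w, v}) (hwv : w ≠ v)
    (hv : vdeg G v < κ) (hφ : IsAcyclicEdgeColoring (G.deleteEdges {s(v, v₀)}) φ)
    (hφκ : ∀ e ∈ (G.deleteEdges {s(v, v₀)}).edgeSet, φ e < κ) (haκ : a < κ)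
    (ha : a ∉ edgeColorsAt (G.deleteEdges {s(v, v₀)}) φ w ∨ a = φ s(w, v₀)) :
    ∃ u, G.Adj v u ∧ φ s(v, u) = a ∧ (κ : ℤ) - vdeg G v + 2 ≤ vdeg G u := by
  set H := G.deleteEdges {s(v, v₀)}
  have hHv : vdeg H v < vdeg G v :=
    vdeg_deleteEdges_lt ((adj_iff_of_neighborSet_eq_pair hN v).mpr (.inr rfl)).symm
  obtain ⟨γ₀, hγ₀κ, hγ₀⟩ := Set.exists_mem_notMem_of_ncard_lt_ncard (t := Set.Iio κ)
    (s := insert a (edgeColorsAt H φ v)) (by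
      have := Set.ncard_insert_le a (edgeColorsAt H φ v)
      rw [hφ.1.ncard_edgeColorsAt] at this
      rw [Set.ncard_Iio_nat]
      omega) ((edgeColorsAt_finite φ v).insert a)
  obtain ⟨u, hvu, -, hvu_col, -⟩ := exists_adj_color_eq_and_mem_edgeColorsAt hκ hN hwv hφ hφκ
    hγ₀κ haκ (fun h => hγ₀ (.inr h)) (fun h => hγ₀ (.inl h)) ha
  have haC : a ∈ edgeColorsAt H φ v := ⟨u, hvu, hvu_col⟩
  have hsub : insert a (Set.Iio κ \ edgeColorsAt H φ v) ⊆ edgeColorsAt H φ u := by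
    rintro γ (rfl | ⟨hγκ, hγ⟩)
    · exact ⟨v, hvu.symm, by simpa [Sym2.eq_swap] using hvu_col⟩
    · obtain ⟨u', hvu', -, hvu'_col, hγu'⟩ := exists_adj_color_eq_and_mem_edgeColorsAt hκ hN hwv
        hφ hφκ hγκ haκ hγ (by rintro rfl; exact hγ haC) ha
      rwa [hφ.1.eq_of_color_eq hvu hvu' (hvu_col.trans hvu'_col.symm)]
  have hcard := Set.ncard_le_ncard hsub (edgeColorsAt_finite φ u)
  rw [Set.ncard_insert_Iio_sdiff (edgeColorsAt_subset_Iio hφκ v) haC, hφ.1.ncard_edgeColorsAt,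
    hφ.1.ncard_edgeColorsAt] at hcard
  have : vdeg H u ≤ vdeg G u := vdeg_mono (deleteEdges_le _) u
  exact ⟨u, deleteEdges_le _ hvu, hvu_col, by omega⟩

lemma DeletionMinimal.le_ncard_of_vdeg_lt [Finite V] (h : DeletionMinimal G κ)
    (hN : G.neighborSet v₀ = {w, v}) (hwv : w ≠ v) (hv : vdeg G v < κ) :
    (κ : ℤ) - vdeg G w + 1 ≤ {x | G.Adj v x ∧ (κ : ℤ) - vdeg G v + 2 ≤ vdeg G x}.ncard := by
  classical
  have hadj := adj_iff_of_neighborSet_eq_pair hN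
  obtain ⟨φ, hφ, hφκ⟩ := h.exists_isAcyclicEdgeColoring_deleteEdges ((hadj v).mpr (.inr rfl)).symm
  set H := G.deleteEdges {s(v, v₀)}
  have hwv₀ : H.Adj w v₀ := by
    simp [H, ((hadj w).mpr (.inl rfl)).symm, hwv, ((hadj v).mpr (.inr rfl)).ne]
  have hsub : insert (φ s(w, v₀)) (Set.Iio κ \ edgeColorsAt H φ w) ⊆
      (fun x => φ s(v, x)) '' {x | G.Adj v x ∧ (κ : ℤ) - vdeg G v + 2 ≤ vdeg G x} := by
    intro a ha
    obtain ⟨haκ, ha⟩ : a < κ ∧ (a ∉ edgeColorsAt H φ w ∨ a = φ s(w, v₀)) := by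
      rcases ha with rfl | ⟨haκ, ha⟩
      exacts [⟨hφκ _ hwv₀, .inr rfl⟩, ⟨haκ, .inl ha⟩]
    obtain ⟨u, hvu, hvu_col, hu⟩ :=
      exists_adj_color_eq_of_vdeg_lt h.2.1 hN hwv hv hφ hφκ haκ ha
    exact ⟨u, ⟨hvu, hu⟩, hvu_col⟩
  have hcard := (Set.ncard_le_ncard hsub).trans (Set.ncard_image_le (Set.toFinite _))
  rw [Set.ncard_insert_Iio_sdiff (edgeColorsAt_subset_Iio hφκ w) ⟨v₀, hwv₀, rfl⟩,
    hφ.1.ncard_edgeColorsAt] at hcard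
  have : vdeg H w ≤ vdeg G w := vdeg_mono (deleteEdges_le _) w
  have := (vdeg_le_maxDeg G w).trans h.1
  omega

end DegreeTwoNeighbor

theorem deletionMinimal_neighbors_of_degree_two_general {V : Type u₁} [Fintype V]
    (G : SimpleGraph V) (κ : ℕ) (h : DeletionMinimal G κ)
    (v v₀ w : V) (hdeg : vdeg G v₀ = 2)
    (hN : G.neighborSet v₀ = {w, v}) :
    (κ : ℤ) - vdeg G w + 1 ≤
      (({x : V | G.Adj v x ∧ (κ : ℤ) - vdeg G v + 2 ≤ (vdeg G x : ℤ)}).ncard : ℤ) := by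
  have hwv : w ≠ v := by
    rintro rfl
    simp [vdeg, hN] at hdeg
  rcases ((vdeg_le_maxDeg G v).trans h.1).lt_or_eq with hv | hv
  · exact h.le_ncard_of_vdeg_lt hN hwv hv
  · have hw := vdeg_pos ((adj_iff_of_neighborSet_eq_pair hN w).mpr (.inl rfl)).symm
    have hsub : G.neighborSet v ⊆ {x | G.Adj v x ∧ (κ : ℤ) - vdeg G v + 2 ≤ vdeg G x} :=
      fun x hx => ⟨hx, by have := h.two_le_vdeg hx; omega⟩
    have := Set.ncard_le_ncard hsub
    rw [vdeg] at hv
    omega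

/-- If `G` is `κ`-deletion-minimal and `v` is adjacent to a degree-2 vertex `v₀` with
`N_G(v₀) = {w, v}`, then `v` is adjacent to at least `κ - deg_G(w) + 1` vertices of
degree at least `κ - deg_G(v) + 2`. -/
theorem deletionMinimal_neighbors_of_degree_two {V : Type u₁} [Fintype V]
    (G : SimpleGraph V) (κ : ℕ) (h : DeletionMinimal G κ)
    (v v₀ w : V) (hadj : G.Adj v v₀) (hdeg : vdeg G v₀ = 2)
    (hN : G.neighborSet v₀ = {w, v}) :
    (κ : ℤ) - vdeg G w + 1 ≤
      (({x : V | G.Adj v x ∧ (κ : ℤ) - vdeg G v + 2 ≤ (vdeg G x : ℤ)}).ncard : ℤ) :=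
  deletionMinimal_neighbors_of_degree_two_general G κ h v v₀ w hdeg hN
end

section
/- Let G be a κ-deletion-minimal graph, uv an edge of G, and φ an acyclic edge coloring of G − uv with colors from {1,…,κ}. Let U(x) denote the set of colors on edges incident with x, and suppose |U(u) ∩ U(v)| = s. Let W(uv) be the set of neighbors u_i of u such that the color φ(uu_i) belongs to U(v) ∖ {φ of the edge uv, which is uncolored} (i.e., φ(uu_i) appears among the colors at v). Then deg_G(u) + deg_G(v) + Σ_{w ∈ W(uv)} deg_G(w) ≥ κ + 2s + 2. -/
open SimpleGraph

universe u₁ u₂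

/-!
Color the uncolored edge `uv` by a color `α < κ` that is missing at both `u` and `v`. The
result is proper, so by `κ < χ'ₐ(G)` some cycle gets at most two colors; it must pass through
`uv`, hence it alternates between `α` and the color `β` of its edge `uw` at `u`. Its edge at `v`
has color `β`, so `w ∈ W(uv)`, and its next edge at `w` has color `α`. So every one of the
`κ - |U(u) ∪ U(v)| = κ - (deg u - 1) - (deg v - 1) + s` missing colors appears at some
`w ∈ W(uv)` on an edge other than `uw`, and there are at most `∑_{w ∈ W(uv)} (deg w - 1)`,
that is `∑_{w ∈ W(uv)} deg w - s`, such edges.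
-/

variable {V : Type*} {G H : SimpleGraph V} {φ : Sym2 V → ℕ} {κ : ℕ}

/-- The set `U_φ(x)`. -/
def colorsAt (H : SimpleGraph V) (φ : Sym2 V → ℕ) (x : V) : Set ℕ :=
  {c | ∃ e ∈ H.edgeSet, x ∈ e ∧ φ e = c}

/-- The set `W_φ(uv)`, for `φ` a coloring of `G - uv`. -/
def sharedColorNeighbors (G : SimpleGraph V) (φ : Sym2 V → ℕ) (u v : V) : Set V :=
  {x | G.Adj u x ∧ x ≠ v ∧ φ s(u, x) ∈ colorsAt (G.deleteEdges {s(u, v)}) φ v}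

lemma colorsAt_eq_image (x : V) :
    colorsAt H φ x = (fun y => φ s(x, y)) '' H.neighborSet x := by
  ext c
  constructor
  · rintro ⟨e, he, hxe, rfl⟩
    obtain ⟨y, rfl⟩ := Sym2.mem_iff_exists.mp hxe
    exact ⟨y, he, rfl⟩
  · rintro ⟨y, hy, rfl⟩
    exact ⟨s(x, y), hy, Sym2.mem_mk_left x y, rfl⟩

lemma colorsAt_subset_Iio (hcol : ∀ e ∈ H.edgeSet, φ e < κ) (x : V) :
    colorsAt H φ x ⊆ Set.Iio κ := by
  rintro _ ⟨e, he, -, rfl⟩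
  exact hcol e he

lemma IsProperEdgeColoring.injOn_neighborSet (hφ : IsProperEdgeColoring H φ) (x : V) :
    Set.InjOn (fun y => φ s(x, y)) (H.neighborSet x) := by
  intro y hy z hz hyz
  by_contra hne
  exact hφ _ hy _ hz (fun h => hne (Sym2.congr_right.mp h))
    ⟨x, Sym2.mem_mk_left x y, Sym2.mem_mk_left x z⟩ hyz

lemma IsProperEdgeColoring.ncard_colorsAt (hφ : IsProperEdgeColoring H φ) (x : V) :
    (colorsAt H φ x).ncard = (H.neighborSet x).ncard := by
  rw [colorsAt_eq_image, (hφ.injOn_neighborSet x).ncard_image]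

lemma IsProperEdgeColoring.finite_neighborSet (hφ : IsProperEdgeColoring H φ)
    (hcol : ∀ e ∈ H.edgeSet, φ e < κ) (x : V) : (H.neighborSet x).Finite :=
  .of_finite_image ((Set.finite_Iio κ).subset (colorsAt_eq_image (φ := φ) x ▸
    colorsAt_subset_Iio hcol x)) (hφ.injOn_neighborSet x)

namespace SimpleGraph

lemma neighborSet_deleteEdges_edge_left (u v : V) :
    (G.deleteEdges {s(u, v)}).neighborSet u = G.neighborSet u \ {v} := by
  ext x
  simp only [mem_neighborSet, deleteEdges_adj, Set.mem_singleton_iff, Sym2.congr_right,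
    Set.mem_sdiff]

lemma neighborSet_deleteEdges_edge_of_ne {u v w : V} (hu : w ≠ u) (hv : w ≠ v) :
    (G.deleteEdges {s(u, v)}).neighborSet w = G.neighborSet w := by
  ext x
  simp [hu, hv]

lemma mem_edgeSet_deleteEdges_edge {u v : V} {e : Sym2 V} (he : e ∈ G.edgeSet)
    (hne : e ≠ s(u, v)) : e ∈ (G.deleteEdges {s(u, v)}).edgeSet := by
  simp [he, hne]

lemma Walk.IsCycle.exists_adj_toSubgraph_ne {x a b : V} {c : G.Walk x x} (hc : c.IsCycle)
    (hab : c.toSubgraph.Adj a b) : ∃ b', b' ≠ b ∧ c.toSubgraph.Adj a b' := by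
  have ha : a ∈ c.support := c.mem_verts_toSubgraph.mp (c.toSubgraph.edge_vert hab)
  obtain ⟨b', hb', hne⟩ := (c.toSubgraph.neighborSet a).exists_ne_of_one_lt_ncard
    (by rw [hc.ncard_neighborSet_toSubgraph_eq_two ha]; norm_num) b
  exact ⟨b', hne, hb'⟩

end SimpleGraph

lemma IsAcyclicEdgeColoring.acyclicChromaticIndex_le {ψ : Sym2 V → ℕ}
    (hψ : IsAcyclicEdgeColoring G ψ) (hcol : ∀ e ∈ G.edgeSet, ψ e < κ) :
    acyclicChromaticIndex G ≤ κ :=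
  Nat.sInf_le ⟨ψ, hψ, hcol⟩

lemma IsProperEdgeColoring.of_deleteEdges_edge {u v : V} {ψ : Sym2 V → ℕ}
    (hφ : IsProperEdgeColoring (G.deleteEdges {s(u, v)}) φ)
    (hψ : ∀ e, e ≠ s(u, v) → ψ e = φ e)
    (hu : ψ s(u, v) ∉ colorsAt (G.deleteEdges {s(u, v)}) φ u)
    (hv : ψ s(u, v) ∉ colorsAt (G.deleteEdges {s(u, v)}) φ v) :
    IsProperEdgeColoring G ψ := by
  have hfresh : ∀ e ∈ G.edgeSet, e ≠ s(u, v) →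
      ∀ x ∈ s(u, v), x ∈ e → ψ e ≠ ψ s(u, v) := by
    intro e he hne x hx hxe heq
    rw [hψ e hne] at heq
    rcases Sym2.mem_iff.mp hx with rfl | rfl
    · exact hu ⟨e, mem_edgeSet_deleteEdges_edge he hne, hxe, heq⟩
    · exact hv ⟨e, mem_edgeSet_deleteEdges_edge he hne, hxe, heq⟩
  intro e₁ he₁ e₂ he₂ h12 ⟨x, hx₁, hx₂⟩
  by_cases h₁ : e₁ = s(u, v) <;> by_cases h₂ : e₂ = s(u, v)
  · exact absurd (h₁.trans h₂.symm) h12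
  · subst h₁
    exact (hfresh e₂ he₂ h₂ x hx₁ hx₂).symm
  · subst h₂
    exact hfresh e₁ he₁ h₁ x hx₂ hx₁
  · rw [hψ e₁ h₁, hψ e₂ h₂]
    exact hφ e₁ (mem_edgeSet_deleteEdges_edge he₁ h₁) e₂
      (mem_edgeSet_deleteEdges_edge he₂ h₂) h12 ⟨x, hx₁, hx₂⟩

lemma Finset.eq_of_card_lt_three {α : Type*} [DecidableEq α] {S : Finset α} (hS : S.card < 3)
    {a b c : α} (ha : a ∈ S) (hb : b ∈ S) (hc : c ∈ S)
    (hba : b ≠ a) (hca : c ≠ a) : b = c := by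
  by_contra hbc
  have : ({a, b, c} : Finset α).card ≤ S.card := Finset.card_le_card (by grind)
  rw [Finset.card_eq_three.mpr ⟨a, b, c, hba.symm, hca.symm, hbc, rfl⟩] at this
  omega

lemma IsAcyclicEdgeColoring.mem_edges_of_card_lt_three {u v x : V} {ψ : Sym2 V → ℕ}
    (hφ : IsAcyclicEdgeColoring (G.deleteEdges {s(u, v)}) φ)
    (hψ : ∀ e, e ≠ s(u, v) → ψ e = φ e) {c : G.Walk x x} (hc : c.IsCycle)
    (hcard : (c.edges.map ψ).toFinset.card < 3) : s(u, v) ∈ c.edges := by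
  by_contra huv
  have hne : ∀ e ∈ c.edges, e ≠ s(u, v) := by rintro e he rfl; exact huv he
  have hH : ∀ e ∈ c.edges, e ∈ (G.deleteEdges {s(u, v)}).edgeSet := fun e he =>
    mem_edgeSet_deleteEdges_edge (c.edges_subset_edgeSet he) (hne e he)
  have h3 := hφ.2 x (c.transfer _ hH) (hc.transfer hH)
  rw [Walk.edges_transfer, ← List.map_congr_left (fun e he => hψ e (hne e he))] at h3
  omega

lemma exists_mem_sharedColorNeighbors_of_isCycle {u v x : V} {ψ : Sym2 V → ℕ}
    (hψG : IsProperEdgeColoring G ψ) (hψ : ∀ e, e ≠ s(u, v) → ψ e = φ e)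
    {c : G.Walk x x} (hc : c.IsCycle) (huv : s(u, v) ∈ c.edges)
    (hcard : (c.edges.map ψ).toFinset.card < 3) :
    ∃ w ∈ sharedColorNeighbors G φ u v,
      ψ s(u, v) ∈ colorsAt (G.deleteEdges {s(u, v)}) φ w \ {φ s(u, w)} := by
  set S := (c.edges.map ψ).toFinset
  have hS : ∀ {a b}, c.toSubgraph.Adj a b → ψ s(a, b) ∈ S := fun h =>
    List.mem_toFinset.mpr (List.mem_map_of_mem (Walk.adj_toSubgraph_iff_mem_edges.mp h))
  have hG : ∀ {a b}, c.toSubgraph.Adj a b → G.Adj a b := fun h => c.toSubgraph.adj_sub h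
  have hTuv : c.toSubgraph.Adj u v := Walk.adj_toSubgraph_iff_mem_edges.mpr huv
  obtain ⟨w, hwv, hTuw⟩ := hc.exists_adj_toSubgraph_ne hTuv
  obtain ⟨z, hzu, hTvz⟩ := hc.exists_adj_toSubgraph_ne hTuv.symm
  obtain ⟨y, hyu, hTwy⟩ := hc.exists_adj_toSubgraph_ne hTuw.symm
  have hwu : w ≠ u := (hG hTuw).ne.symm
  have huw_uv : s(u, w) ≠ s(u, v) := fun h => hwv (Sym2.congr_right.mp h)
  have hvz_uv : s(v, z) ≠ s(u, v) := fun h => hzu (Sym2.congr_right.mp (h.trans Sym2.eq_swap))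
  have hwy_uw : s(w, y) ≠ s(u, w) := fun h => hyu (Sym2.congr_right.mp (h.trans Sym2.eq_swap))
  have hwy_uv : s(w, y) ≠ s(u, v) := by simp [hwu, hwv]
  -- the cycle uses only two colors, `ψ s(u, v)` and `ψ s(u, w)`, and alternates between them
  have huw : ψ s(u, w) ≠ ψ s(u, v) :=
    hψG _ (hG hTuw) _ (hG hTuv) huw_uv ⟨u, Sym2.mem_mk_left u w, Sym2.mem_mk_left u v⟩
  have hvz : ψ s(v, z) ≠ ψ s(u, v) :=
    hψG _ (hG hTvz) _ (hG hTuv) hvz_uv ⟨v, Sym2.mem_mk_left v z, Sym2.mem_mk_right u v⟩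
  have hwy : ψ s(w, y) ≠ ψ s(u, w) :=
    hψG _ (hG hTwy) _ (hG hTuw) hwy_uw ⟨w, Sym2.mem_mk_left w y, Sym2.mem_mk_right u w⟩
  have hvz_eq : ψ s(v, z) = ψ s(u, w) :=
    S.eq_of_card_lt_three hcard (hS hTuv) (hS hTvz) (hS hTuw) hvz huw
  have hwy_eq : ψ s(w, y) = ψ s(u, v) := by
    by_contra h
    exact hwy (S.eq_of_card_lt_three hcard (hS hTuv) (hS hTwy) (hS hTuw) h huw)
  rw [hψ _ huw_uv, hψ _ hvz_uv] at hvz_eq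
  refine ⟨w, ⟨hG hTuw, hwv, s(v, z), mem_edgeSet_deleteEdges_edge (hG hTvz) hvz_uv,
    Sym2.mem_mk_left v z, hvz_eq⟩, ⟨s(w, y), mem_edgeSet_deleteEdges_edge (hG hTwy) hwy_uv,
    Sym2.mem_mk_left w y, by rw [← hψ _ hwy_uv, hwy_eq]⟩, ?_⟩
  rw [Set.mem_singleton_iff, ← hψ _ huw_uv]
  exact huw.symm

lemma exists_mem_sharedColorNeighbors_of_notMem_colorsAt {u v : V} {α : ℕ}
    (hG : κ < acyclicChromaticIndex G) (hφ : IsAcyclicEdgeColoring (G.deleteEdges {s(u, v)}) φ)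
    (hcol : ∀ e ∈ (G.deleteEdges {s(u, v)}).edgeSet, φ e < κ) (hακ : α < κ)
    (hu : α ∉ colorsAt (G.deleteEdges {s(u, v)}) φ u)
    (hv : α ∉ colorsAt (G.deleteEdges {s(u, v)}) φ v) :
    ∃ w ∈ sharedColorNeighbors G φ u v,
      α ∈ colorsAt (G.deleteEdges {s(u, v)}) φ w \ {φ s(u, w)} := by
  classical
  set ψ := Function.update φ s(u, v) α
  have hψ : ∀ e, e ≠ s(u, v) → ψ e = φ e := fun e he => Function.update_of_ne he _ _
  have hψuv : ψ s(u, v) = α := Function.update_self _ _ _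
  have hψG : IsProperEdgeColoring G ψ :=
    hφ.1.of_deleteEdges_edge hψ (hψuv ▸ hu) (hψuv ▸ hv)
  have hψcol : ∀ e ∈ G.edgeSet, ψ e < κ := by
    intro e he
    by_cases h : e = s(u, v)
    · rwa [h, hψuv]
    · rw [hψ e h]
      exact hcol e (mem_edgeSet_deleteEdges_edge he h)
  have hψac : ¬ IsAcyclicEdgeColoring G ψ := fun h =>
    hG.not_ge (h.acyclicChromaticIndex_le hψcol)
  obtain ⟨x, c, hc, hcard⟩ :
      ∃ x, ∃ c : G.Walk x x, c.IsCycle ∧ (c.edges.map ψ).toFinset.card < 3 := by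
    simpa [IsAcyclicEdgeColoring, hψG] using hψac
  simpa only [hψuv] using exists_mem_sharedColorNeighbors_of_isCycle hψG hψ hc
    (hφ.mem_edges_of_card_lt_three hψ hc hcard) hcard

section Counting

variable {u v : V}

lemma sharedColorNeighbors_subset_neighborSet :
    sharedColorNeighbors G φ u v ⊆ (G.deleteEdges {s(u, v)}).neighborSet u := by
  rw [neighborSet_deleteEdges_edge_left]
  exact fun x hx => ⟨hx.1, hx.2.1⟩

lemma image_sharedColorNeighbors :
    (fun x => φ s(u, x)) '' sharedColorNeighbors G φ u v =
      colorsAt (G.deleteEdges {s(u, v)}) φ u ∩ colorsAt (G.deleteEdges {s(u, v)}) φ v := by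
  ext c
  simp only [colorsAt_eq_image (x := u), neighborSet_deleteEdges_edge_left]
  constructor
  · rintro ⟨x, ⟨hux, hxv, hc⟩, rfl⟩
    exact ⟨⟨x, ⟨hux, hxv⟩, rfl⟩, hc⟩
  · rintro ⟨⟨x, ⟨hux, hxv⟩, rfl⟩, hc⟩
    exact ⟨x, ⟨hux, hxv, hc⟩, rfl⟩

lemma IsProperEdgeColoring.ncard_sharedColorNeighbors
    (hφ : IsProperEdgeColoring (G.deleteEdges {s(u, v)}) φ) :
    (sharedColorNeighbors G φ u v).ncard =
      (colorsAt (G.deleteEdges {s(u, v)}) φ u ∩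
        colorsAt (G.deleteEdges {s(u, v)}) φ v).ncard := by
  rw [← image_sharedColorNeighbors,
    ((hφ.injOn_neighborSet u).mono sharedColorNeighbors_subset_neighborSet).ncard_image]

variable (hφ : IsProperEdgeColoring (G.deleteEdges {s(u, v)}) φ)
  (hcol : ∀ e ∈ (G.deleteEdges {s(u, v)}).edgeSet, φ e < κ)
include hφ hcol

lemma vdeg_eq_ncard_colorsAt_add_one {x y : V} (hxy : G.Adj x y) (he : s(x, y) = s(u, v)) :
    vdeg G x = (colorsAt (G.deleteEdges {s(u, v)}) φ x).ncard + 1 := by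
  rw [← he] at hφ hcol ⊢
  have hfin := hφ.finite_neighborSet hcol x
  rw [neighborSet_deleteEdges_edge_left] at hfin
  rw [hφ.ncard_colorsAt, neighborSet_deleteEdges_edge_left, vdeg]
  exact (Set.ncard_sdiff_singleton_add_one hxy (hfin.of_sdiff (Set.finite_singleton y))).symm

lemma vdeg_eq_ncard_colorsAt_sdiff_add_one {w : V} (hw : w ∈ sharedColorNeighbors G φ u v) :
    vdeg G w = (colorsAt (G.deleteEdges {s(u, v)}) φ w \ {φ s(u, w)}).ncard + 1 := by
  obtain ⟨huw, hwv, -⟩ := hw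
  have huw_mem : φ s(u, w) ∈ colorsAt (G.deleteEdges {s(u, v)}) φ w :=
    ⟨s(u, w), mem_edgeSet_deleteEdges_edge huw fun h => hwv (Sym2.congr_right.mp h),
      Sym2.mem_mk_right u w, rfl⟩
  rw [Set.ncard_sdiff_singleton_add_one huw_mem
      ((Set.finite_Iio κ).subset (colorsAt_subset_Iio hcol w)),
    hφ.ncard_colorsAt, neighborSet_deleteEdges_edge_of_ne huw.ne.symm hwv, vdeg]

lemma finsum_vdeg_sharedColorNeighbors :
    ∑ᶠ w ∈ sharedColorNeighbors G φ u v, vdeg G w =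
      ∑ᶠ w ∈ sharedColorNeighbors G φ u v,
        (colorsAt (G.deleteEdges {s(u, v)}) φ w \ {φ s(u, w)}).ncard +
      (colorsAt (G.deleteEdges {s(u, v)}) φ u ∩
        colorsAt (G.deleteEdges {s(u, v)}) φ v).ncard := by
  have hfin := (hφ.finite_neighborSet hcol u).subset
    (sharedColorNeighbors_subset_neighborSet (φ := φ))
  rw [finsum_mem_congr rfl fun w hw => vdeg_eq_ncard_colorsAt_sdiff_add_one hφ hcol hw,
    finsum_mem_add_distrib hfin, finsum_one, hφ.ncard_sharedColorNeighbors]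

end Counting

lemma ncard_Iio_sdiff_union_add {A B : Set ℕ} (hA : A ⊆ Set.Iio κ) (hB : B ⊆ Set.Iio κ) :
    κ + (A ∩ B).ncard = (Set.Iio κ \ (A ∪ B)).ncard + A.ncard + B.ncard := by
  have hfinA := (Set.finite_Iio κ).subset hA
  have hfinB := (Set.finite_Iio κ).subset hB
  rw [add_assoc, ← Set.ncard_union_add_ncard_inter A B hfinA hfinB, ← add_assoc,
    Set.ncard_sdiff_add_ncard_of_subset (Set.union_subset hA hB), Set.ncard_Iio_nat]

lemma ncard_Iio_sdiff_colorsAt_le {u v : V} (hG : κ < acyclicChromaticIndex G)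
    (hφ : IsAcyclicEdgeColoring (G.deleteEdges {s(u, v)}) φ)
    (hcol : ∀ e ∈ (G.deleteEdges {s(u, v)}).edgeSet, φ e < κ) :
    (Set.Iio κ \ (colorsAt (G.deleteEdges {s(u, v)}) φ u ∪
        colorsAt (G.deleteEdges {s(u, v)}) φ v)).ncard ≤
      ∑ᶠ w ∈ sharedColorNeighbors G φ u v,
        (colorsAt (G.deleteEdges {s(u, v)}) φ w \ {φ s(u, w)}).ncard := by
  have hWfin := (hφ.1.finite_neighborSet hcol u).subset
    (sharedColorNeighbors_subset_neighborSet (φ := φ))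
  have hcover : Set.Iio κ \ (colorsAt (G.deleteEdges {s(u, v)}) φ u ∪
        colorsAt (G.deleteEdges {s(u, v)}) φ v) ⊆
      ⋃ w ∈ sharedColorNeighbors G φ u v,
        colorsAt (G.deleteEdges {s(u, v)}) φ w \ {φ s(u, w)} := by
    rintro α ⟨hα, hαU⟩
    obtain ⟨w, hw, hαw⟩ := exists_mem_sharedColorNeighbors_of_notMem_colorsAt hG hφ hcol hα
      (fun h => hαU (Or.inl h)) (fun h => hαU (Or.inr h))
    exact Set.mem_biUnion hw hαw
  have hfin : (⋃ w ∈ sharedColorNeighbors G φ u v,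
      colorsAt (G.deleteEdges {s(u, v)}) φ w \ {φ s(u, w)}).Finite :=
    hWfin.biUnion fun w _ => ((Set.finite_Iio κ).subset (colorsAt_subset_Iio hcol w)).sdiff
  exact (Set.ncard_le_ncard hcover hfin).trans (hWfin.ncard_biUnion_le _)

theorem deletionMinimal_common_colors_degree_sum_general {V : Type u₁}
    (G : SimpleGraph V) (κ : ℕ) (h : DeletionMinimal G κ)
    (u v : V) (huv : G.Adj u v) (φ : Sym2 V → ℕ)
    (hφ : IsAcyclicEdgeColoring (G.deleteEdges {s(u, v)}) φ)
    (hcol : ∀ e ∈ (G.deleteEdges {s(u, v)}).edgeSet, φ e < κ)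
    (s : ℕ)
    (hs : ({c : ℕ | ∃ e ∈ (G.deleteEdges {s(u, v)}).edgeSet, u ∈ e ∧ φ e = c} ∩
        {c : ℕ | ∃ e ∈ (G.deleteEdges {s(u, v)}).edgeSet, v ∈ e ∧ φ e = c}).ncard = s) :
    κ + 2 * s + 2 ≤ vdeg G u + vdeg G v +
      ∑ᶠ x ∈ {x : V | G.Adj u x ∧ x ≠ v ∧
        φ s(u, x) ∈
          {c : ℕ | ∃ e ∈ (G.deleteEdges {s(u, v)}).edgeSet, v ∈ e ∧ φ e = c}},
        vdeg G x := by
  change κ + 2 * s + 2 ≤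
    vdeg G u + vdeg G v + ∑ᶠ x ∈ sharedColorNeighbors G φ u v, vdeg G x
  have hcommon : (colorsAt (G.deleteEdges {s(u, v)}) φ u ∩
      colorsAt (G.deleteEdges {s(u, v)}) φ v).ncard = s := hs
  have hcolors :=
    ncard_Iio_sdiff_union_add (colorsAt_subset_Iio hcol u) (colorsAt_subset_Iio hcol v)
  have hdeg_u := vdeg_eq_ncard_colorsAt_add_one hφ.1 hcol huv rfl
  have hdeg_v := vdeg_eq_ncard_colorsAt_add_one hφ.1 hcol huv.symm Sym2.eq_swap
  have hmissing := ncard_Iio_sdiff_colorsAt_le h.2.1 hφ hcol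
  have hW := finsum_vdeg_sharedColorNeighbors hφ.1 hcol
  omega

/-- **Fact 2 (third part).** Let `G` be `κ`-deletion-minimal, `uv ∈ E(G)`, and `φ` an
acyclic edge coloring of `G - uv` with colors from `{0, …, κ-1}`. If the set of colors
at `u` and the set of colors at `v` share exactly `s` colors, and `W(uv)` is the set of
neighbors `x ≠ v` of `u` such that the color of `ux` appears at `v`, then
`deg_G(u) + deg_G(v) + Σ_{w ∈ W(uv)} deg_G(w) ≥ κ + 2s + 2`. -/
theorem deletionMinimal_common_colors_degree_sum {V : Type u₁} [Fintype V]
    (G : SimpleGraph V) (κ : ℕ) (h : DeletionMinimal G κ)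
    (u v : V) (huv : G.Adj u v) (φ : Sym2 V → ℕ)
    (hφ : IsAcyclicEdgeColoring (G.deleteEdges {s(u, v)}) φ)
    (hcol : ∀ e ∈ (G.deleteEdges {s(u, v)}).edgeSet, φ e < κ)
    (s : ℕ)
    (hs : ({c : ℕ | ∃ e ∈ (G.deleteEdges {s(u, v)}).edgeSet, u ∈ e ∧ φ e = c} ∩
        {c : ℕ | ∃ e ∈ (G.deleteEdges {s(u, v)}).edgeSet, v ∈ e ∧ φ e = c}).ncard = s) :
    κ + 2 * s + 2 ≤ vdeg G u + vdeg G v +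
      ∑ᶠ x ∈ {x : V | G.Adj u x ∧ x ≠ v ∧
        φ s(u, x) ∈
          {c : ℕ | ∃ e ∈ (G.deleteEdges {s(u, v)}).edgeSet, v ∈ e ∧ φ e = c}},
        vdeg G x :=
  deletionMinimal_common_colors_degree_sum_general G κ h u v huv φ hφ hcol s hs
end
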